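/- arXiv:1508.00527 — 2 statements merged into one kernel-verified Lean document; each statement's English description precedes it below -/
import Mathlib

section
/- Every finite game admitting an exact potential function has at least one pure Nash equilibrium; in particular, any maximizer of the potential function over the (finite) set of action profiles is a pure Nash equilibrium. -/
open Function

section PotentialGame

variable {ι : Type*} [DecidableEq ι] {A : ι → Type*}
  {G : Type*} [AddCommGroup G] [PartialOrder G] [IsOrderedAddMonoid G]

def IsPureNashEquilibrium (u : ((i : ι) → A i) → ι → G) (a : (i : ι) → A i) : Prop :=
  ∀ (i : ι) (b : A i), u (update a i b) i ≤ u a i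

theorem isPureNashEquilibrium_of_forall_potential_le {u : ((i : ι) → A i) → ι → G}
    {Φ : ((i : ι) → A i) → G}
    (hΦ : ∀ (i : ι) (a : (i : ι) → A i) (ai bi : A i),
      u (update a i ai) i - u (update a i bi) i = Φ (update a i ai) - Φ (update a i bi))
    {a : (i : ι) → A i} (hmax : ∀ b, Φ b ≤ Φ a) :
    IsPureNashEquilibrium u a := by
  intro i b
  have hdiff := hΦ i a (a i) b
  rw [update_eq_self] at hdiff
  exact sub_nonneg.mp (hdiff ▸ sub_nonneg.mpr (hmax _))

end PotentialGame

/-- Every finite game with an exact potential has a pure Nash equilibrium;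
any maximizer of the potential is a pure Nash equilibrium. -/
theorem stmt_2 (N : ℕ) (A : Fin N → Type*)
    [∀ n, Fintype (A n)] [∀ n, Nonempty (A n)]
    (u : ((n : Fin N) → A n) → Fin N → ℝ)
    (Φ : ((n : Fin N) → A n) → ℝ)
    (hΦ : ∀ (n : Fin N) (a : (n : Fin N) → A n) (an bn : A n),
      u (Function.update a n an) n - u (Function.update a n bn) n =
        Φ (Function.update a n an) - Φ (Function.update a n bn)) :
    (∀ astar : (n : Fin N) → A n, (∀ a, Φ a ≤ Φ astar) →
      ∀ (n : Fin N) (b : A n), u (Function.update astar n b) n ≤ u astar n) ∧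
    ∃ astar : (n : Fin N) → A n,
      ∀ (n : Fin N) (b : A n), u (Function.update astar n b) n ≤ u astar n := by
  have maximizer_isNash := fun astar ↦ isPureNashEquilibrium_of_forall_potential_le hΦ (a := astar)
  obtain ⟨astar, hmax⟩ := Finite.exists_max Φ
  exact ⟨maximizer_isNash, astar, maximizer_isNash astar hmax⟩
end

section
/- In the game G2 with M < N (strictly fewer actions than players), every action profile in which every action in ℳ is chosen by at least two players is a pure Nash equilibrium. -/
open Finset

/-- A player's deviation cannot escape a collision if every action already has two takers:
whatever action the player moves to, some other player still holds it. -/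
lemma exists_ne_of_two_le_card_filter {ι : Type*} [Fintype ι] {p : ι → Prop} [DecidablePred p]
    (hp : 2 ≤ #(univ.filter p)) (n : ι) : ∃ n', n' ≠ n ∧ p n' := by
  obtain ⟨n', hn', hne⟩ := (one_lt_card_iff_nontrivial.mp hp).exists_ne n
  exact ⟨n', hne, (mem_filter.mp hn').2⟩

theorem stmt_6_general (N M : ℕ) (β : ℝ)
    (S : Fin N → Fin M → ℝ)
    (w : (Fin N → Fin M) → Fin N → ℝ)
    (hw : ∀ a n, w a n =
      if ∃ n', n' ≠ n ∧ a n' = a n then -2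
      else if β ≤ S n (a n) then 1 else -1) :
    ∀ a : Fin N → Fin M,
      (∀ m : Fin M, 2 ≤ (Finset.univ.filter (fun n => a n = m)).card) →
      ∀ (n : Fin N) (b : Fin M), w (Function.update a n b) n ≤ w a n := by
  intro a ha n b
  have collision_before := exists_ne_of_two_le_card_filter (ha (a n)) n
  obtain ⟨n', hne, hn'⟩ := exists_ne_of_two_le_card_filter (ha b) n
  have collision_after : ∃ k, k ≠ n ∧ Function.update a n b k = Function.update a n b n := by
    refine ⟨n', hne, ?_⟩
    rw [Function.update_of_ne hne, Function.update_self, hn']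
  rw [hw, hw, if_pos collision_before, if_pos collision_after]

/-- In game G2 with M < N, every profile in which each action is chosen by at
least two players is a pure Nash equilibrium. -/
theorem stmt_6 (N M : ℕ) (hMN : M < N) (β : ℝ) (hβ : 0 < β)
    (S : Fin N → Fin M → ℝ)
    (w : (Fin N → Fin M) → Fin N → ℝ)
    (hw : ∀ a n, w a n =
      if ∃ n', n' ≠ n ∧ a n' = a n then -2
      else if β ≤ S n (a n) then 1 else -1) :
    ∀ a : Fin N → Fin M,
      (∀ m : Fin M, 2 ≤ (Finset.univ.filter (fun n => a n = m)).card) →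
      ∀ (n : Fin N) (b : Fin M), w (Function.update a n b) n ≤ w a n :=
  stmt_6_general N M β S w hw
end
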